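/- arXiv:2401.02300 — 2 statements merged into one kernel-verified Lean document; each statement's English description precedes it below -/
import Mathlib

section
/- Discrete Poincaré inequality: for any grid function u on the uniform grid of the unit square vanishing on the boundary, ‖u‖_h ≤ 2 ‖∇_{x+} u‖_h, and in particular ‖u‖_h ≤ 2 ‖u‖_{∇,h}. -/
noncomputable section

/-- Boundary-zero grid functions on `{0,…,N}²`. -/
def BZ (N : ℕ) (u : ℕ → ℕ → ℝ) : Prop :=
  ∀ i j, i ≤ N → j ≤ N → (i = 0 ∨ i = N ∨ j = 0 ∨ j = N) → u i j = 0

/-- `‖u‖_h² = h² Σ u_{ij}²`. -/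
def normH2 (N : ℕ) (h : ℝ) (u : ℕ → ℕ → ℝ) : ℝ :=
  h ^ 2 * ∑ i ∈ Finset.range (N + 1), ∑ j ∈ Finset.range (N + 1), (u i j) ^ 2

/-- `‖∇_{x+}u‖_h²`. -/
def gradXNorm2 (N : ℕ) (h : ℝ) (u : ℕ → ℕ → ℝ) : ℝ :=
  h ^ 2 * ∑ i ∈ Finset.range N, ∑ j ∈ Finset.range (N + 1),
      ((u (i + 1) j - u i j) / h) ^ 2

/-- `‖u‖_{∇,h}² = ‖∇_{x+}u‖_h² + ‖∇_{y+}u‖_h²`. -/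
def gradNorm2 (N : ℕ) (h : ℝ) (u : ℕ → ℕ → ℝ) : ℝ :=
  gradXNorm2 N h u
  + h ^ 2 * ∑ i ∈ Finset.range (N + 1), ∑ j ∈ Finset.range N,
      ((u i (j + 1) - u i j) / h) ^ 2

lemma normH2_le (N : ℕ) (hN : 0 < N) (h : ℝ) (hh : h = 1 / N)
    (u : ℕ → ℕ → ℝ) (hu : BZ N u) :
    normH2 N h u ≤ 2 * gradXNorm2 N h u := by
  have hNpos : (0:ℝ) < N := by exact_mod_cast hN
  have hhne : h ≠ 0 := by rw [hh]; positivity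
  -- pointwise bound
  have key : ∀ i ∈ Finset.range (N+1), ∀ j ∈ Finset.range (N+1),
      (u i j) ^ 2 ≤ (N:ℝ) * ∑ k ∈ Finset.range N, (u (k+1) j - u k j) ^ 2 := by
    intro i hi j hj
    rw [Finset.mem_range] at hi hj
    have hval : u i j = ∑ k ∈ Finset.range i, (u (k+1) j - u k j) := by
      rw [Finset.sum_range_sub (fun k => u k j), hu 0 j (Nat.zero_le _) (by omega) (Or.inl rfl),
        sub_zero]
    calc (u i j)^2 = (∑ k ∈ Finset.range i, (u (k+1) j - u k j))^2 := by rw [hval]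
      _ ≤ (Finset.range i).card * ∑ k ∈ Finset.range i, (u (k+1) j - u k j)^2 :=
          sq_sum_le_card_mul_sum_sq
      _ ≤ (N:ℝ) * ∑ k ∈ Finset.range N, (u (k+1) j - u k j)^2 := by
          apply mul_le_mul
          · simp; exact_mod_cast (by omega : i ≤ N)
          · apply Finset.sum_le_sum_of_subset_of_nonneg
            · exact Finset.range_subset_range.2 (by omega)
            · intros; positivity
          · positivity
          · positivity
  -- sum bound
  have S : ∑ i ∈ Finset.range (N+1), ∑ j ∈ Finset.range (N+1), (u i j)^2
      ≤ (N+1 : ℝ) * ((N:ℝ) * ∑ j ∈ Finset.range (N+1), ∑ k ∈ Finset.range N,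
          (u (k+1) j - u k j)^2) := by
    have : ∀ i ∈ Finset.range (N+1), ∑ j ∈ Finset.range (N+1), (u i j)^2
        ≤ (N:ℝ) * ∑ j ∈ Finset.range (N+1), ∑ k ∈ Finset.range N, (u (k+1) j - u k j)^2 := by
      intro i hi
      rw [Finset.mul_sum]
      exact Finset.sum_le_sum (fun j hj => key i hi j hj)
    calc _ ≤ ∑ _i ∈ Finset.range (N+1), ((N:ℝ) * ∑ j ∈ Finset.range (N+1),
            ∑ k ∈ Finset.range N, (u (k+1) j - u k j)^2) := Finset.sum_le_sum this
      _ = _ := by rw [Finset.sum_const, Finset.card_range]; push_cast; ring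
  -- rewrite gradXNorm2
  have hg : gradXNorm2 N h u = ∑ k ∈ Finset.range N, ∑ j ∈ Finset.range (N+1),
      (u (k+1) j - u k j)^2 := by
    unfold gradXNorm2
    rw [Finset.mul_sum]
    apply Finset.sum_congr rfl
    intro k _
    rw [Finset.mul_sum]
    apply Finset.sum_congr rfl
    intro j _
    field_simp
  rw [hg, Finset.sum_comm]
  unfold normH2
  calc h^2 * ∑ i ∈ Finset.range (N+1), ∑ j ∈ Finset.range (N+1), (u i j)^2
      ≤ h^2 * ((N+1 : ℝ) * ((N:ℝ) * ∑ j ∈ Finset.range (N+1), ∑ k ∈ Finset.range N,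
          (u (k+1) j - u k j)^2)) := by
        apply mul_le_mul_of_nonneg_left S (by positivity)
    _ ≤ 2 * ∑ j ∈ Finset.range (N+1), ∑ k ∈ Finset.range N, (u (k+1) j - u k j)^2 := by
        have hT : (0:ℝ) ≤ ∑ j ∈ Finset.range (N+1), ∑ k ∈ Finset.range N,
            (u (k+1) j - u k j)^2 := by positivity
        have hc : h^2 * ((N+1:ℝ) * (N:ℝ)) ≤ 2 := by
          rw [hh]
          rw [div_pow, one_pow, div_mul_eq_mul_div, div_le_iff₀ (by positivity)]
          have : ((N:ℝ)+1) ≤ 2 * N := by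
            have : (1:ℝ) ≤ N := by exact_mod_cast hN
            linarith
          nlinarith [sq_nonneg ((N:ℝ))]
        calc h^2 * ((N+1:ℝ) * ((N:ℝ) * _)) = (h^2 * ((N+1:ℝ)*(N:ℝ))) * _ := by ring
          _ ≤ 2 * _ := mul_le_mul_of_nonneg_right hc hT

lemma gradX_nonneg (N : ℕ) (h : ℝ) (u : ℕ → ℕ → ℝ) : 0 ≤ gradXNorm2 N h u := by
  unfold gradXNorm2; positivity

/-- Discrete Poincaré inequality: `‖u‖_h ≤ 2 ‖∇_{x+}u‖_h ≤ 2 ‖u‖_{∇,h}`. -/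
theorem discrete_poincare
    (N : ℕ) (hN : 0 < N) (h : ℝ) (hh : h = 1 / N)
    (u : ℕ → ℕ → ℝ) (hu : BZ N u) :
    Real.sqrt (normH2 N h u) ≤ 2 * Real.sqrt (gradXNorm2 N h u) ∧
    Real.sqrt (normH2 N h u) ≤ 2 * Real.sqrt (gradNorm2 N h u) := by
  have h1 := normH2_le N hN h hh u hu
  have hgx := gradX_nonneg N h u
  have hmain : Real.sqrt (normH2 N h u) ≤ 2 * Real.sqrt (gradXNorm2 N h u) := by
    have : normH2 N h u ≤ 4 * gradXNorm2 N h u := by linarith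
    calc Real.sqrt (normH2 N h u) ≤ Real.sqrt (4 * gradXNorm2 N h u) :=
          Real.sqrt_le_sqrt this
      _ = 2 * Real.sqrt (gradXNorm2 N h u) := by
          rw [show (4:ℝ) = 2^2 by norm_num, Real.sqrt_mul (by positivity),
            Real.sqrt_sq (by norm_num : (0:ℝ) ≤ 2)]
  refine ⟨hmain, hmain.trans ?_⟩
  gcongr 2 * ?_
  apply Real.sqrt_le_sqrt
  unfold gradNorm2
  have : (0:ℝ) ≤ h ^ 2 * ∑ i ∈ Finset.range (N + 1), ∑ j ∈ Finset.range N,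
      ((u i (j + 1) - u i j) / h) ^ 2 := by positivity
  linarith
end
end

section
/- For boundary-zero grid functions u, the identity ‖u‖_h² = −(φ, (u + τ_x u) ∇_{x+} u)_h holds, where φ_{i,j} = i h and τ_x is the x-translation operator. -/
noncomputable section

/-- The x-translation operator: `(τ_x u)_{i,j} = u_{i+1,j}` for `i < N`, `0` for `i = N`. -/
def tauX (N : ℕ) (u : ℕ → ℕ → ℝ) : ℕ → ℕ → ℝ :=
  fun i j => if i < N then u (i + 1) j else 0

lemma abel_aux (N : ℕ) (a : ℕ → ℝ) (h0 : a 0 = 0) (hN : a N = 0) :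
    ∑ i ∈ Finset.range (N + 1), a i
      = -∑ i ∈ Finset.range N, (i : ℝ) * (a (i + 1) - a i) := by
  have t : ∑ i ∈ Finset.range N, (((i+1 : ℕ) : ℝ) * a (i+1) - (i : ℝ) * a i)
      = (N : ℝ) * a N - (0:ℕ) * a 0 := Finset.sum_range_sub (fun i => (i : ℝ) * a i) N
  have t2 : ∑ i ∈ Finset.range (N + 1), a i = (∑ i ∈ Finset.range N, a (i+1)) + a 0 :=
    Finset.sum_range_succ' a N
  have key : ∀ i : ℕ, (i : ℝ) * (a (i+1) - a i)
      = (((i+1 : ℕ) : ℝ) * a (i+1) - (i : ℝ) * a i) - a (i+1) := by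
    intro i; push_cast; ring
  rw [t2, h0]
  simp only [key, Finset.sum_sub_distrib, t, hN, h0]
  ring

/-- For boundary-zero grid functions `u`, with `φ_{i,j} = ih`,
`‖u‖_h² = −(φ, (u + τ_x u) ∇_{x+} u)_h` (the pairing runs over the points `i < N`
where the forward difference is defined; at `i = N` the integrand vanishes). -/
theorem normH2_eq_neg_pairing
    (N : ℕ) (hN : 0 < N) (h : ℝ) (hh : h = 1 / N)
    (u : ℕ → ℕ → ℝ) (hu : BZ N u) :
    normH2 N h u
      = -(h ^ 2 * ∑ i ∈ Finset.range N, ∑ j ∈ Finset.range (N + 1),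
          ((i : ℝ) * h) * ((u i j + tauX N u i j) * ((u (i + 1) j - u i j) / h))) := by
  have hne : h ≠ 0 := by
    rw [hh]; positivity
  have hswap1 : ∑ i ∈ Finset.range (N + 1), ∑ j ∈ Finset.range (N + 1), (u i j) ^ 2
      = ∑ j ∈ Finset.range (N + 1), ∑ i ∈ Finset.range (N + 1), (u i j) ^ 2 :=
    Finset.sum_comm
  have hswap2 : ∑ i ∈ Finset.range N, ∑ j ∈ Finset.range (N + 1),
        ((i : ℝ) * h) * ((u i j + tauX N u i j) * ((u (i + 1) j - u i j) / h))
      = ∑ j ∈ Finset.range (N + 1), ∑ i ∈ Finset.range N,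
        ((i : ℝ) * h) * ((u i j + tauX N u i j) * ((u (i + 1) j - u i j) / h)) :=
    Finset.sum_comm
  unfold normH2
  rw [hswap1, hswap2, neg_mul_eq_mul_neg]
  congr 1
  rw [← Finset.sum_neg_distrib]
  apply Finset.sum_congr rfl
  intro j hj
  have hjN : j ≤ N := Nat.lt_succ_iff.mp (Finset.mem_range.mp hj)
  have h0 : u 0 j ^ 2 = 0 := by rw [hu 0 j (Nat.zero_le N) hjN (Or.inl rfl)]; ring
  have hNj : u N j ^ 2 = 0 := by rw [hu N j le_rfl hjN (Or.inr (Or.inl rfl))]; ring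
  rw [abel_aux N (fun i => u i j ^ 2) h0 hNj, neg_inj]
  apply Finset.sum_congr rfl
  intro i hi
  have hiN : i < N := Finset.mem_range.mp hi
  have : tauX N u i j = u (i + 1) j := if_pos hiN
  rw [this]
  field_simp
  ring
end
end
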